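/- Let ξ_n = 2^{-n/2} Σ_{i=2^n}^{2^{n+1}-1} e_i for n ≥ 1, and let V be the unique bounded operator on ℓ²(ℕ) with V e_n = ξ_n for all n ≥ 1. If T is a bounded linear operator on ℓ²(ℕ) with ‖T − V‖ < 1/2, then for every n ≥ 1 one has Σ_{i=2^n}^{2^{n+1}-1} |⟨e_i, T e_n⟩| ≥ 2^{n/2}/2. -/

import Mathlib

/-!
Write `T eₙ = ξₙ + w` with `w = (T - V) eₙ`, so `‖w‖ < 1/2`. Every coordinate of `ξₙ` on the
dyadic block `[2ⁿ, 2ⁿ⁺¹)` equals `2^{-n/2}`, so the block sum of `|⟨eᵢ, T eₙ⟩|` is at least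
`2ⁿ · 2^{-n/2} - ∑ |wᵢ|`, and by Cauchy–Schwarz over the `2ⁿ` indices
`∑ |wᵢ| ≤ 2^{n/2} ‖w‖ ≤ 2^{n/2}/2`.
-/

noncomputable abbrev ellTwo : Type := lp (fun _ : ℕ => ℂ) 2

/-- The standard orthonormal basis vectors of ℓ²(ℕ). -/
noncomputable def e (n : ℕ) : ellTwo := lp.single 2 n (1 : ℂ)

/-- `ξ n = 2^{-n/2} ∑_{i=2^n}^{2^{n+1}-1} e i`. -/
noncomputable def xiVec (n : ℕ) : ellTwo :=
  ((Real.sqrt (2 ^ n) : ℝ) : ℂ)⁻¹ • ∑ i ∈ Finset.Icc (2 ^ n) (2 ^ (n + 1) - 1), e i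

open Finset
open scoped ENNReal

namespace lp

variable {ι : Type*} {E : ι → Type*} [∀ i, NormedAddCommGroup (E i)]

theorem sum_norm_sq_le_norm_sq (f : lp E 2) (s : Finset ι) :
    ∑ i ∈ s, ‖f i‖ ^ 2 ≤ ‖f‖ ^ 2 := by
  simpa using lp.sum_rpow_le_norm_rpow (by norm_num : 0 < (2 : ℝ≥0∞).toReal) f s

theorem sum_norm_le_sqrt_card_mul_norm (f : lp E 2) (s : Finset ι) :
    ∑ i ∈ s, ‖f i‖ ≤ √(#s) * ‖f‖ := by
  calc ∑ i ∈ s, ‖f i‖ = ∑ i ∈ s, 1 * ‖f i‖ := by simp only [one_mul]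
    _ ≤ √(∑ i ∈ s, (1 : ℝ) ^ 2) * √(∑ i ∈ s, ‖f i‖ ^ 2) :=
      Real.sum_mul_le_sqrt_mul_sqrt s _ _
    _ ≤ √(#s) * ‖f‖ := by
      rw [← Real.sqrt_sq (norm_nonneg f)]
      simp only [one_pow, sum_const, nsmul_eq_mul, mul_one]
      gcongr
      exact sum_norm_sq_le_norm_sq f s

theorem card_mul_norm_sub_le_sum_norm_add {F : Type*} [NormedAddCommGroup F]
    (s : Finset ι) (c : F) (w : lp (fun _ : ι => F) 2) :
    #s * ‖c‖ - √(#s) * ‖w‖ ≤ ∑ i ∈ s, ‖c + w i‖ := by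
  calc #s * ‖c‖ - √(#s) * ‖w‖ ≤ ∑ i ∈ s, (‖c‖ - ‖w i‖) := by
        rw [sum_sub_distrib, sum_const, nsmul_eq_mul]
        linarith [sum_norm_le_sqrt_card_mul_norm w s]
    _ ≤ ∑ i ∈ s, ‖c + w i‖ := sum_le_sum fun i _ => norm_sub_le_norm_add c (w i)

end lp

theorem inner_e_left (i : ℕ) (f : ellTwo) : @inner ℂ _ _ (e i) f = f i := by
  simp [e, lp.inner_single_left]

theorem norm_e (i : ℕ) : ‖e i‖ = 1 := by
  simp [e, lp.norm_single]

theorem card_Icc_two_pow (n : ℕ) : #(Icc (2 ^ n) (2 ^ (n + 1) - 1)) = 2 ^ n := by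
  rw [Nat.card_Icc, pow_succ]
  have := Nat.one_le_two_pow (n := n)
  omega

theorem xiVec_apply_of_mem {n i : ℕ} (hi : i ∈ Icc (2 ^ n) (2 ^ (n + 1) - 1)) :
    xiVec n i = ((√(2 ^ n) : ℝ) : ℂ)⁻¹ := by
  have hsum : (∑ j ∈ Icc (2 ^ n) (2 ^ (n + 1) - 1), e j : ellTwo) i = 1 := by
    rw [lp.coeFn_sum, Finset.sum_apply, Finset.sum_eq_single_of_mem i hi]
    · simp [e]
    · intro j _ hj
      simp [e, Pi.single_eq_of_ne (Ne.symm hj)]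
  rw [xiVec, lp.coeFn_smul, Pi.smul_apply, hsum, smul_eq_mul, mul_one]

/-- if `V` is a bounded operator on ℓ²(ℕ) with `V eₙ = ξₙ` for all `n ≥ 1`,
and `T` is a bounded operator with `‖T − V‖ < 1/2`, then for every `n ≥ 1` one has
`∑_{i=2^n}^{2^{n+1}-1} |⟨eᵢ, T eₙ⟩| ≥ 2^{n/2}/2`. -/
theorem stmt2 (V T : ellTwo →L[ℂ] ellTwo)
    (hV : ∀ n : ℕ, 1 ≤ n → V (e n) = xiVec n)
    (hTV : ‖T - V‖ < 1 / 2) :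
    ∀ n : ℕ, 1 ≤ n →
      Real.sqrt (2 ^ n) / 2 ≤
        ∑ i ∈ Finset.Icc (2 ^ n) (2 ^ (n + 1) - 1), ‖@inner ℂ _ _ (e i) (T (e n))‖ := by
  intro n hn
  set s := Icc (2 ^ n) (2 ^ (n + 1) - 1)
  set c : ℂ := ((√(2 ^ n) : ℝ) : ℂ)⁻¹
  set w := (T - V) (e n)
  have hw : ‖w‖ ≤ 1 / 2 :=
    calc ‖w‖ ≤ ‖T - V‖ * ‖e n‖ := (T - V).le_opNorm (e n)
      _ = ‖T - V‖ := by rw [norm_e, mul_one]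
      _ ≤ 1 / 2 := hTV.le
  have hentries : ∀ i ∈ s, ‖@inner ℂ _ _ (e i) (T (e n))‖ = ‖c + w i‖ := by
    intro i hi
    have hT : T (e n) = xiVec n + w := by simp [w, hV n hn]
    rw [inner_e_left, hT, lp.coeFn_add, Pi.add_apply, xiVec_apply_of_mem hi]
  have hmass : (#s : ℝ) * ‖c‖ = √(2 ^ n) := by
    rw [card_Icc_two_pow, norm_inv, Complex.norm_real, Real.norm_of_nonneg (by positivity)]
    push_cast
    rw [← div_eq_mul_inv, Real.div_sqrt]
  calc √(2 ^ n) / 2 ≤ √(2 ^ n) - √(2 ^ n) * ‖w‖ := by nlinarith [Real.sqrt_nonneg (2 ^ n : ℝ)]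
    _ ≤ ∑ i ∈ s, ‖c + w i‖ := by
      have h := lp.card_mul_norm_sub_le_sum_norm_add s c w
      rwa [hmass, card_Icc_two_pow, Nat.cast_pow, Nat.cast_ofNat] at h
    _ = ∑ i ∈ s, ‖@inner ℂ _ _ (e i) (T (e n))‖ := (sum_congr rfl hentries).symm
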